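/- arXiv:2301.09124 — 2 statements merged into one kernel-verified Lean document; each statement's English description precedes it below -/
import Mathlib

section
/- For -1 < v ≤ 1 and c > 0, the ratio (∫_{-1}^{v} u(1-u²)^{c-1} du) / (∫_{-1}^{v} (1-u²)^{c-1} du) equals -(1-v²)^c / (2^{2c} c B(c,c) I_{c,c}((v+1)/2)). -/
open MeasureTheory

/-- The beta function `B(c,c) = Γ(c)Γ(c)/Γ(2c)`. -/
noncomputable def betaCC (c : ℝ) : ℝ := Real.Gamma c * Real.Gamma c / Real.Gamma (2 * c)

/-- The regularized incomplete beta function `I_{c,c}(x)`,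
i.e. the CDF of a `Beta(c,c)` distribution. -/
noncomputable def regIncBetaCC (c x : ℝ) : ℝ :=
  (∫ t in (0:ℝ)..x, t ^ (c - 1) * (1 - t) ^ (c - 1)) / betaCC c

lemma aux_intble {c : ℝ} (hc : 0 < c) :
    IntervalIntegrable (fun u : ℝ => (1 - u) ^ (c - 1) * (1 + u) ^ (c - 1)) volume (-1) 1 := by
  have hr : (-1 : ℝ) < c - 1 := by linarith
  have hL : IntervalIntegrable (fun u : ℝ => (1 - u) ^ (c - 1) * (1 + u) ^ (c - 1))
      volume (-1) 0 := by
    have h1 : IntervalIntegrable (fun u : ℝ => (1 + u) ^ (c - 1)) volume (-1) 0 := by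
      have := (intervalIntegral.intervalIntegrable_rpow' (a := 0) (b := 1) hr).comp_add_right 1
      simpa [add_comm] using this
    have hcont : ContinuousOn (fun u : ℝ => (1 - u) ^ (c - 1)) (Set.uIcc (-1 : ℝ) 0) := by
      apply ContinuousOn.rpow_const
        ((continuous_const.sub continuous_id').continuousOn)
      intro x hx
      left
      rw [Set.uIcc_of_le (by norm_num : (-1:ℝ) ≤ 0)] at hx
      intro h
      linarith [hx.2, show (1:ℝ) - x = 0 from h]
    exact h1.continuousOn_mul hcont
  have hR : IntervalIntegrable (fun u : ℝ => (1 - u) ^ (c - 1) * (1 + u) ^ (c - 1))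
      volume 0 1 := by
    have h2 : IntervalIntegrable (fun u : ℝ => (1 + u) ^ (c - 1) * (1 - u) ^ (c - 1))
        volume 1 0 := by
      convert ((IntervalIntegrable.iff_comp_neg (by exact enorm_ne_top)).mp hL) using 2 with u
      · ring_nf
      · norm_num
      · norm_num
    simpa [mul_comm] using h2.symm
  exact hL.trans hR

theorem ratio_of_integrals (v c : ℝ) (hv1 : -1 < v) (hv2 : v ≤ 1) (hc : 0 < c) :
    (∫ u in (-1:ℝ)..v, u * (1 - u ^ 2) ^ (c - 1)) /
      (∫ u in (-1:ℝ)..v, (1 - u ^ 2) ^ (c - 1)) =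
      -(1 - v ^ 2) ^ c / (2 ^ (2 * c) * c * betaCC c * regIncBetaCC c ((v + 1) / 2)) := by
  have hv1' : (-1 : ℝ) ≤ v := hv1.le
  have hsub : Set.uIcc (-1 : ℝ) v ⊆ Set.uIcc (-1 : ℝ) 1 :=
    Set.uIcc_subset_uIcc (Set.left_mem_uIcc)
      (by rw [Set.uIcc_of_le (by norm_num : (-1:ℝ) ≤ 1)]; exact ⟨hv1', hv2⟩)
  -- pointwise factorization on [-1, v]
  have hfact : ∀ u ∈ Set.uIcc (-1 : ℝ) v,
      (1 - u ^ 2) ^ (c - 1) = (1 - u) ^ (c - 1) * (1 + u) ^ (c - 1) := by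
    intro u hu
    rw [Set.uIcc_of_le hv1'] at hu
    have h1 : (0:ℝ) ≤ 1 - u := by nlinarith [hu.1, hu.2]
    have h2 : (0:ℝ) ≤ 1 + u := by linarith [hu.1]
    rw [← Real.mul_rpow h1 h2]
    ring_nf
  -- integrability of the denominator integrand
  have hint : IntervalIntegrable (fun u : ℝ => (1 - u ^ 2) ^ (c - 1)) volume (-1) v := by
    refine ((aux_intble hc).mono_set hsub).congr ?_
    exact (fun u hu => (hfact u (Set.uIoc_subset_uIcc hu)).symm)
  -- integrability of the numerator integrand
  have hintN : IntervalIntegrable (fun u : ℝ => u * (1 - u ^ 2) ^ (c - 1)) volume (-1) v :=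
    hint.continuousOn_mul continuous_id.continuousOn
  -- Step A: numerator = -(1-v^2)^c / (2c)
  have hnum : (∫ u in (-1:ℝ)..v, u * (1 - u ^ 2) ^ (c - 1)) = -(1 - v ^ 2) ^ c / (2 * c) := by
    have hF : ∀ x ∈ Set.Ioo (-1:ℝ) v,
        HasDerivAt (fun u : ℝ => -(1 - u ^ 2) ^ c / (2 * c)) (x * (1 - x ^ 2) ^ (c - 1)) x := by
      intro x hx
      have hx1 : (1:ℝ) - x ^ 2 ≠ 0 := by nlinarith [hx.1, hx.2]
      have h1 : HasDerivAt (fun u : ℝ => 1 - u ^ 2) (-(2 * x)) x := by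
        simpa using ((hasDerivAt_pow 2 x).const_sub 1)
      have h2 := ((h1.rpow_const (p := c) (Or.inl hx1)).neg).div_const (2 * c)
      refine h2.congr_deriv ?_
      rw [div_eq_iff (mul_ne_zero two_ne_zero hc.ne')]
      ring
    have hcont : ContinuousOn (fun u : ℝ => -(1 - u ^ 2) ^ c / (2 * c)) (Set.Icc (-1:ℝ) v) := by
      apply ContinuousOn.div_const
      apply ContinuousOn.neg
      apply ContinuousOn.rpow_const ((continuous_const.sub (continuous_pow 2)).continuousOn)
      intro x _
      right; exact hc.le
    have := intervalIntegral.integral_eq_sub_of_hasDerivAt_of_le hv1' hcont hF hintN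
    rw [this]
    have h0 : (1:ℝ) - (-1:ℝ) ^ 2 = 0 := by norm_num
    rw [h0, Real.zero_rpow hc.ne']
    ring
  -- Step B: denominator = 2^(2c-1) * ∫_0^((v+1)/2) t^(c-1) (1-t)^(c-1)
  have hden : (∫ u in (-1:ℝ)..v, (1 - u ^ 2) ^ (c - 1)) =
      (2:ℝ) ^ (2 * c - 1) * ∫ t in (0:ℝ)..((v + 1) / 2), t ^ (c - 1) * (1 - t) ^ (c - 1) := by
    have h2pos : (0:ℝ) < (2:ℝ) ^ (c - 1) := Real.rpow_pos_of_pos two_pos _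
    have step1 : (∫ u in (-1:ℝ)..v, (1 - u ^ 2) ^ (c - 1)) =
        ∫ u in (-1:ℝ)..v, (2:ℝ) ^ (2 * c - 2) *
          ((fun t : ℝ => t ^ (c - 1) * (1 - t) ^ (c - 1)) (u / 2 + 1 / 2)) := by
      apply intervalIntegral.integral_congr
      intro u hu
      show (1 - u ^ 2) ^ (c - 1) =
        2 ^ (2 * c - 2) * ((u / 2 + 1 / 2) ^ (c - 1) * (1 - (u / 2 + 1 / 2)) ^ (c - 1))
      rw [hfact u hu]
      rw [Set.uIcc_of_le hv1'] at hu
      have h1 : (0:ℝ) ≤ 1 - u := by nlinarith [hu.1, hu.2]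
      have h2 : (0:ℝ) ≤ 1 + u := by linarith [hu.1]
      have e1 : u / 2 + 1 / 2 = (1 + u) / 2 := by ring
      have e2 : 1 - (u / 2 + 1 / 2) = (1 - u) / 2 := by ring
      rw [e2, e1, Real.div_rpow h2 two_pos.le, Real.div_rpow h1 two_pos.le]
      have e3 : (2:ℝ) ^ (2 * c - 2) = 2 ^ (c - 1) * 2 ^ (c - 1) := by
        rw [← Real.rpow_add two_pos]; ring_nf
      rw [e3]
      field_simp
    rw [step1, intervalIntegral.integral_const_mul,
      intervalIntegral.integral_comp_div_add (fun t : ℝ => t ^ (c - 1) * (1 - t) ^ (c - 1))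
        (two_ne_zero : (2:ℝ) ≠ 0) (1/2 : ℝ)]
    have e4 : v / 2 + 1 / 2 = (v + 1) / 2 := by ring
    have e5 : (-1:ℝ) / 2 + 1 / 2 = 0 := by norm_num
    rw [e4, e5, smul_eq_mul]
    have e6 : (2:ℝ) ^ (2 * c - 1) = 2 ^ (2 * c - 2) * 2 := by
      rw [← Real.rpow_add_one two_ne_zero]; ring_nf
    rw [e6]; ring
  rw [hnum, hden]
  unfold regIncBetaCC
  have hb : betaCC c ≠ 0 := by
    unfold betaCC
    have h1 := Real.Gamma_pos_of_pos hc
    have h2 := Real.Gamma_pos_of_pos (by linarith : (0:ℝ) < 2 * c)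
    positivity
  have e7 : (2:ℝ) ^ (2 * c) = 2 ^ (2 * c - 1) * 2 := by
    rw [← Real.rpow_add_one two_ne_zero]; ring_nf
  rw [div_div, e7]
  congr 1
  field_simp
end

section
/- Let X₁ ~ N(μ₁, σ²/n₁), X₂ ~ N(μ₂, σ²/n₁) be independent, and conditionally on the event {X₁ ≥ X₂} (resp. {X₂ > X₁}) let Y ~ N(μ₁, σ²/n₂) (resp. N(μ₂, σ²/n₂)) independent of (X₁,X₂). Define μ_Q = μ₁·1{X₁ ≥ X₂} + μ₂·1{X₂ > X₁} and X_Q = max(X₁,X₂). Then E[((n₁ X_Q + n₂ Y)/(n₁+n₂) − μ_Q)²/σ²] = 1/(n₁+n₂), for all (μ₁, μ₂, σ). -/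
open MeasureTheory ProbabilityTheory Real
open scoped NNReal ENNReal

variable {v : ℝ≥0}

lemma gauss_withDensity (μ : ℝ) (v : ℝ≥0) (hv : v ≠ 0) :
    gaussianReal μ v = volume.withDensity (fun x => ((gaussianPDFReal μ v x).toNNReal : ℝ≥0∞)) := by
  rw [gaussianReal_of_var_ne_zero μ hv]; rfl

lemma gauss_int (μ : ℝ) (hv : v ≠ 0) (g : ℝ → ℝ) :
    ∫ x, g x ∂(gaussianReal μ v) = ∫ x, gaussianPDFReal μ v x * g x := by
  rw [gauss_withDensity μ v hv,
    integral_withDensity_eq_integral_smul (measurable_gaussianPDFReal μ v).real_toNNReal g]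
  congr 1; ext x
  rw [NNReal.smul_def, Real.coe_toNNReal _ (gaussianPDFReal_nonneg μ v x), smul_eq_mul]

lemma gauss_integrable_iff (μ : ℝ) (hv : v ≠ 0) (g : ℝ → ℝ) :
    Integrable g (gaussianReal μ v) ↔ Integrable (fun x => gaussianPDFReal μ v x * g x) := by
  rw [gauss_withDensity μ v hv,
    integrable_withDensity_iff_integrable_smul (measurable_gaussianPDFReal μ v).real_toNNReal]
  constructor <;> intro h <;> refine h.congr (Filter.Eventually.of_forall fun x => ?_) <;>
    simp only [NNReal.smul_def, Real.coe_toNNReal _ (gaussianPDFReal_nonneg μ v x), smul_eq_mul]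

lemma pdf0_eq (v : ℝ≥0) (x : ℝ) :
    gaussianPDFReal 0 v x = (Real.sqrt (2 * π * v))⁻¹ * Real.exp (-(2*(v:ℝ))⁻¹ * x^2) := by
  rw [gaussianPDFReal]
  congr 1
  rw [sub_zero]
  ring_nf

lemma int_sq_exp {b : ℝ} (hb : 0 < b) :
    ∫ x : ℝ, x^2 * Real.exp (-b * x^2) = b ^ (-(3:ℝ)/2) * Real.sqrt π / 2 := by
  have habs : ∫ x : ℝ, x^2 * Real.exp (-b * x^2)
      = ∫ x : ℝ, (fun t => t^2 * Real.exp (-b * t^2)) |x| := by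
    congr 1; ext x; simp [sq_abs]
  rw [habs, integral_comp_abs (f := fun t => t^2 * Real.exp (-b * t^2))]
  have hIoi : ∫ x in Set.Ioi (0:ℝ), x^2 * Real.exp (-b * x^2)
      = ∫ x in Set.Ioi (0:ℝ), x ^ (2:ℝ) * Real.exp (-b * x ^ (2:ℝ)) := by
    refine setIntegral_congr_fun measurableSet_Ioi (fun x hx => ?_)
    rw [show (2:ℝ) = ((2:ℕ):ℝ) by norm_num, Real.rpow_natCast]
  rw [hIoi, integral_rpow_mul_exp_neg_mul_rpow (by norm_num) (by norm_num) hb]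
  rw [show (-((2:ℝ)+1)/2) = -(3:ℝ)/2 by norm_num]
  rw [show ((2:ℝ)+1)/2 = 1/2 + 1 by norm_num, Real.Gamma_add_one (by norm_num),
    Real.Gamma_one_half_eq]
  ring

lemma vpos (hv : v ≠ 0) : (0:ℝ) < v := NNReal.coe_pos.mpr (pos_iff_ne_zero.mpr hv)

lemma g0_integrable_sq (hv : v ≠ 0) : Integrable (fun x : ℝ => x^2) (gaussianReal 0 v) := by
  rw [gauss_integrable_iff 0 hv]
  have hb : (0:ℝ) < (2*(v:ℝ))⁻¹ := by have := vpos hv; positivity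
  have h := (integrable_rpow_mul_exp_neg_mul_sq hb (s := 2) (by norm_num)).const_mul
    ((Real.sqrt (2 * π * v))⁻¹)
  have h2 : ∀ y : ℝ, y ^ (2:ℝ) = y ^ 2 := fun y => by
    rw [show (2:ℝ) = ((2:ℕ):ℝ) by norm_num, Real.rpow_natCast]
  refine h.congr (Filter.Eventually.of_forall fun x => ?_)
  simp only [h2, pdf0_eq]
  ring

lemma g0_integrable_id (hv : v ≠ 0) : Integrable (fun x : ℝ => x) (gaussianReal 0 v) := by
  rw [gauss_integrable_iff 0 hv]
  have hb : (0:ℝ) < (2*(v:ℝ))⁻¹ := by have := vpos hv; positivity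
  have h := (integrable_rpow_mul_exp_neg_mul_sq hb (s := 1) (by norm_num)).const_mul
    ((Real.sqrt (2 * π * v))⁻¹)
  refine h.congr (Filter.Eventually.of_forall fun x => ?_)
  simp only [Real.rpow_one, pdf0_eq]
  ring

lemma g0_integral_sq (hv : v ≠ 0) : ∫ x, x^2 ∂(gaussianReal 0 v) = v := by
  rw [gauss_int 0 hv]
  have hvpos := vpos hv
  have hb : (0:ℝ) < (2*(v:ℝ))⁻¹ := by positivity
  have : ∀ x : ℝ, gaussianPDFReal 0 v x * x^2
      = (Real.sqrt (2 * π * v))⁻¹ * (x^2 * Real.exp (-(2*(v:ℝ))⁻¹ * x^2)) := by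
    intro x; rw [pdf0_eq]; ring
  simp_rw [this]
  rw [integral_const_mul, int_sq_exp hb]
  set t := 2*(v:ℝ) with ht_def
  have ht : (0:ℝ) < t := by positivity
  have h1 : (t⁻¹) ^ (-(3:ℝ)/2) = t * Real.sqrt t := by
    rw [Real.inv_rpow ht.le, ← Real.rpow_neg ht.le,
      show (-(-(3:ℝ)/2)) = 1 + 1/2 by norm_num,
      Real.rpow_add ht, Real.rpow_one, ← Real.sqrt_eq_rpow]
  have h2 : Real.sqrt (2 * π * v) = Real.sqrt t * Real.sqrt π := by
    rw [show 2 * π * (v:ℝ) = t * π by rw [ht_def]; ring, Real.sqrt_mul ht.le]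
  rw [h1, h2]
  have h3 : Real.sqrt t * Real.sqrt t = t := Real.mul_self_sqrt ht.le
  have h4 : Real.sqrt t ≠ 0 := by positivity
  have h5 : Real.sqrt π ≠ 0 := by positivity
  have h6 : Real.sqrt t ^ 2 = 2*(v:ℝ) := by rw [sq, h3, ht_def]
  field_simp
  rw [ht_def]

lemma g0_integral_id (hv : v ≠ 0) : ∫ x, x ∂(gaussianReal 0 v) = 0 := by
  rw [gauss_int 0 hv]
  set g : ℝ → ℝ := fun x => gaussianPDFReal 0 v x * x with hg
  have hodd : ∀ x, g (-x) = - g x := by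
    intro x
    simp only [hg, pdf0_eq, neg_sq]
    ring
  have e : ℝ ≃ᵐ ℝ := (Homeomorph.neg ℝ).toMeasurableEquiv
  have hmap : Measure.map (fun x : ℝ => -x) volume = volume :=
    Measure.map_neg_eq_self volume
  have : ∫ x, g x = ∫ x, g (-x) := by
    conv_lhs => rw [← hmap]
    exact MeasureTheory.integral_map_equiv (Homeomorph.neg ℝ).toMeasurableEquiv g
  simp_rw [hodd, integral_neg] at this
  linarith

lemma gmap (m : ℝ) (v : ℝ≥0) :
    Measure.map (fun x => x + m) (gaussianReal 0 v) = gaussianReal m v := by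
  have := gaussianReal_map_add_const (μ := 0) (v := v) m
  simpa using this

lemma g_integrable_sub_sq (m : ℝ) (hv : v ≠ 0) :
    Integrable (fun x => (x - m)^2) (gaussianReal m v) := by
  rw [← gmap m v, integrable_map_measure
    (Measurable.aestronglyMeasurable (by fun_prop)) (by fun_prop)]
  refine (g0_integrable_sq hv).congr (Filter.Eventually.of_forall fun x => ?_)
  simp [Function.comp]

lemma g_integral_sub_sq (m : ℝ) (hv : v ≠ 0) :
    ∫ x, (x - m)^2 ∂(gaussianReal m v) = (v:ℝ) := by
  rw [← gmap m v, integral_map (by fun_prop)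
    (Measurable.aestronglyMeasurable (by fun_prop))]
  simpa using g0_integral_sq hv

lemma g_integrable_sub (m : ℝ) (hv : v ≠ 0) :
    Integrable (fun x => x - m) (gaussianReal m v) := by
  rw [← gmap m v, integrable_map_measure
    (Measurable.aestronglyMeasurable (by fun_prop)) (by fun_prop)]
  refine (g0_integrable_id hv).congr (Filter.Eventually.of_forall fun x => ?_)
  simp [Function.comp]

lemma g_integral_sub (m : ℝ) (hv : v ≠ 0) :
    ∫ x, (x - m) ∂(gaussianReal m v) = 0 := by
  rw [← gmap m v, integral_map (by fun_prop)
    (Measurable.aestronglyMeasurable (by fun_prop))]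
  simpa using g0_integral_id hv

section RV
variable {Ω : Type*} [MeasureSpace Ω] [IsProbabilityMeasure (ℙ : Measure Ω)]
  {W : Ω → ℝ} {m : ℝ}

lemma rv_integrable_sub (hW : Measurable W) (hv : v ≠ 0)
    (hmap : Measure.map W ℙ = gaussianReal m v) :
    Integrable (fun ω => W ω - m) ℙ := by
  have h := (integrable_map_measure
    (g := fun x => x - m) (Measurable.aestronglyMeasurable (by fun_prop))
    hW.aemeasurable).mp (by rw [hmap]; exact g_integrable_sub m hv)
  exact h

lemma rv_integral_sub (hW : Measurable W) (hv : v ≠ 0)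
    (hmap : Measure.map W ℙ = gaussianReal m v) :
    ∫ ω, (W ω - m) ∂ℙ = 0 := by
  have h := integral_map (μ := (ℙ : Measure Ω)) (φ := W) hW.aemeasurable
    (f := fun x => x - m) (Measurable.aestronglyMeasurable (by fun_prop))
  rw [hmap] at h
  rw [← h]
  exact g_integral_sub m hv

lemma rv_integrable_sub_sq (hW : Measurable W) (hv : v ≠ 0)
    (hmap : Measure.map W ℙ = gaussianReal m v) :
    Integrable (fun ω => (W ω - m)^2) ℙ := by
  have h := (integrable_map_measure
    (g := fun x => (x - m)^2) (Measurable.aestronglyMeasurable (by fun_prop))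
    hW.aemeasurable).mp (by rw [hmap]; exact g_integrable_sub_sq m hv)
  exact h

lemma rv_integral_sub_sq (hW : Measurable W) (hv : v ≠ 0)
    (hmap : Measure.map W ℙ = gaussianReal m v) :
    ∫ ω, (W ω - m)^2 ∂ℙ = (v:ℝ) := by
  have h := integral_map (μ := (ℙ : Measure Ω)) (φ := W) hW.aemeasurable
    (f := fun x => (x - m)^2) (Measurable.aestronglyMeasurable (by fun_prop))
  rw [hmap] at h
  rw [← h]
  exact g_integral_sub_sq m hv

end RV

lemma neg_map_gauss0 (v : ℝ≥0) : Measure.map (fun x : ℝ => -x) (gaussianReal 0 v) = gaussianReal 0 v := by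
  have h := gaussianReal_map_const_mul (μ := 0) (v := v) (-1)
  have h1 : ((-1:ℝ) * ·) = (fun x : ℝ => -x) := funext fun x => by ring
  have h2 : (⟨(-1:ℝ)^2, sq_nonneg _⟩ : ℝ≥0) = 1 := by ext; norm_num
  rw [h1] at h
  convert h using 2
  · simp
  · ext; simp

lemma crux {v : ℝ≥0} (hv : v ≠ 0) (m₁ m₂ : ℝ) :
    ∫ p : ℝ × ℝ, (if p.2 ≤ p.1 then (p.1 - m₁)^2 else (p.2 - m₂)^2)
      ∂((gaussianReal m₁ v).prod (gaussianReal m₂ v)) = (v:ℝ) := by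
  set γ₀ := gaussianReal 0 v with hγ₀
  set ρ := γ₀.prod γ₀ with hρ
  have hGmeas : Measurable (fun p : ℝ × ℝ => if p.2 ≤ p.1 then (p.1 - m₁)^2 else (p.2 - m₂)^2) :=
    Measurable.ite (measurableSet_le measurable_snd measurable_fst) (by fun_prop) (by fun_prop)
  have hprodmap : (gaussianReal m₁ v).prod (gaussianReal m₂ v)
      = Measure.map (Prod.map (fun x => x + m₁) (fun x => x + m₂)) ρ := by
    rw [← gmap m₁ v, ← gmap m₂ v, Measure.map_prod_map _ _ (by fun_prop) (by fun_prop)]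
  rw [hprodmap, integral_map (by fun_prop) hGmeas.aestronglyMeasurable]
  set H : ℝ × ℝ → ℝ := fun q => if q.2 + m₂ ≤ q.1 + m₁ then q.1^2 else q.2^2 with hH
  have hHmeas : Measurable H :=
    Measurable.ite (measurableSet_le (by fun_prop) (by fun_prop)) (by fun_prop) (by fun_prop)
  have hintegrand : ∀ q : ℝ × ℝ,
      (if (Prod.map (fun x => x + m₁) (fun x => x + m₂) q).2
          ≤ (Prod.map (fun x => x + m₁) (fun x => x + m₂) q).1
        then ((Prod.map (fun x => x + m₁) (fun x => x + m₂) q).1 - m₁)^2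
        else ((Prod.map (fun x => x + m₁) (fun x => x + m₂) q).2 - m₂)^2) = H q := by
    intro q
    simp only [Prod.map, hH, add_sub_cancel_right]
  rw [show (fun q => (if (Prod.map (fun x => x + m₁) (fun x => x + m₂) q).2
          ≤ (Prod.map (fun x => x + m₁) (fun x => x + m₂) q).1
        then ((Prod.map (fun x => x + m₁) (fun x => x + m₂) q).1 - m₁)^2
        else ((Prod.map (fun x => x + m₁) (fun x => x + m₂) q).2 - m₂)^2)) = H from
    funext hintegrand]
  -- moments of the marginals
  have hfst : Measure.map Prod.fst ρ = γ₀ := by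
    rw [hρ, Measure.map_fst_prod]; simp
  have hsnd : Measure.map Prod.snd ρ = γ₀ := by
    rw [hρ, Measure.map_snd_prod]; simp
  have hInt1 : Integrable (fun q : ℝ × ℝ => q.1^2) ρ := by
    have := (integrable_map_measure (g := fun x : ℝ => x^2)
      (Measurable.aestronglyMeasurable (by fun_prop)) measurable_fst.aemeasurable).mp
      (by rw [hfst]; exact g0_integrable_sq hv)
    exact this
  have hInt2 : Integrable (fun q : ℝ × ℝ => q.2^2) ρ := by
    have := (integrable_map_measure (g := fun x : ℝ => x^2)
      (Measurable.aestronglyMeasurable (by fun_prop)) measurable_snd.aemeasurable).mp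
      (by rw [hsnd]; exact g0_integrable_sq hv)
    exact this
  have hV1 : ∫ q : ℝ × ℝ, q.1^2 ∂ρ = (v:ℝ) := by
    have := integral_map (μ := ρ) (φ := Prod.fst) measurable_fst.aemeasurable
      (f := fun x : ℝ => x^2) (Measurable.aestronglyMeasurable (by fun_prop))
    rw [hfst] at this
    rw [← this]
    exact g0_integral_sq hv
  have hV2 : ∫ q : ℝ × ℝ, q.2^2 ∂ρ = (v:ℝ) := by
    have := integral_map (μ := ρ) (φ := Prod.snd) measurable_snd.aemeasurable
      (f := fun x : ℝ => x^2) (Measurable.aestronglyMeasurable (by fun_prop))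
    rw [hsnd] at this
    rw [← this]
    exact g0_integral_sq hv
  have hIntH : Integrable H ρ := by
    refine (hInt1.add hInt2).mono hHmeas.aestronglyMeasurable
      (Filter.Eventually.of_forall fun q => ?_)
    simp only [hH, Pi.add_apply, Real.norm_eq_abs]
    split_ifs <;>
      rw [abs_of_nonneg (sq_nonneg _), abs_of_nonneg (by positivity)] <;>
      nlinarith [sq_nonneg q.1, sq_nonneg q.2]
  -- the symmetry
  set e : ℝ × ℝ → ℝ × ℝ := fun q => (-q.2, -q.1) with he_def
  have hemeas : Measurable e := by fun_prop
  have hmape : Measure.map e ρ = ρ := by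
    have hcomp : e = (Prod.map (fun x : ℝ => -x) (fun x : ℝ => -x)) ∘ Prod.swap := rfl
    rw [hcomp, ← Measure.map_map (by fun_prop) measurable_swap, hρ, Measure.prod_swap,
      ← Measure.map_prod_map _ _ (by fun_prop) (by fun_prop), neg_map_gauss0]
  have hIntHe : Integrable (H ∘ e) ρ := by
    refine (integrable_map_measure hHmeas.aestronglyMeasurable hemeas.aemeasurable).mp ?_
    rw [hmape]; exact hIntH
  have key : ∫ q, H q ∂ρ = ∫ q, H (e q) ∂ρ := by
    conv_lhs => rw [← hmape]
    exact integral_map hemeas.aemeasurable hHmeas.aestronglyMeasurable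
  have hsum : ∀ q : ℝ × ℝ, H q + H (e q) = q.1^2 + q.2^2 := by
    intro q
    have hiff : ((e q).2 + m₂ ≤ (e q).1 + m₁) ↔ (q.2 + m₂ ≤ q.1 + m₁) := by
      simp only [he_def]; constructor <;> intro h <;> linarith
    by_cases hc : q.2 + m₂ ≤ q.1 + m₁
    · have e1 : H q = q.1^2 := by simp only [hH]; rw [if_pos hc]
      have e2 : H (e q) = (-q.2)^2 := by
        simp only [hH, he_def]
        rw [if_pos (by simpa [he_def] using hiff.mpr hc)]
      rw [e1, e2]; ring
    · have e1 : H q = q.2^2 := by simp only [hH]; rw [if_neg hc]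
      have e2 : H (e q) = (-q.1)^2 := by
        simp only [hH, he_def]
        rw [if_neg (by simpa [he_def] using (fun h => hc (hiff.mp h)))]
      rw [e1, e2]; ring
  have hdouble : (∫ q, H q ∂ρ) + (∫ q, H q ∂ρ) = (v:ℝ) + (v:ℝ) := by
    calc (∫ q, H q ∂ρ) + (∫ q, H q ∂ρ) = (∫ q, H q ∂ρ) + (∫ q, H (e q) ∂ρ) := by rw [← key]
    _ = ∫ q, (H q + H (e q)) ∂ρ := (integral_add hIntH hIntHe).symm
    _ = ∫ q : ℝ × ℝ, (q.1^2 + q.2^2) ∂ρ := by simp_rw [hsum]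
    _ = (v:ℝ) + (v:ℝ) := by rw [integral_add hInt1 hInt2, hV1, hV2]
  linarith

theorem main' {Ω : Type*} [MeasureSpace Ω]
    [IsProbabilityMeasure (ℙ : Measure Ω)]
    (X₁ X₂ Y₁ Y₂ : Ω → ℝ) (μ₁ μ₂ σ : ℝ) (hσ : 0 < σ) (n₁ n₂ : ℕ)
    (hn₁ : 0 < n₁) (hn₂ : 0 < n₂)
    (hm1 : Measurable X₁) (hm2 : Measurable X₂) (hm3 : Measurable Y₁) (hm4 : Measurable Y₂)
    (hindep : iIndepFun ![X₁, X₂, Y₁, Y₂] ℙ)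
    (hX₁ : Measure.map X₁ ℙ = gaussianReal μ₁ (Real.toNNReal (σ ^ 2 / n₁)))
    (hX₂ : Measure.map X₂ ℙ = gaussianReal μ₂ (Real.toNNReal (σ ^ 2 / n₁)))
    (hY₁ : Measure.map Y₁ ℙ = gaussianReal μ₁ (Real.toNNReal (σ ^ 2 / n₂)))
    (hY₂ : Measure.map Y₂ ℙ = gaussianReal μ₂ (Real.toNNReal (σ ^ 2 / n₂))) :
    ∫ ω, ((n₁ * max (X₁ ω) (X₂ ω)
        + n₂ * (if X₂ ω ≤ X₁ ω then Y₁ ω else Y₂ ω)) / (n₁ + n₂)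
        - (if X₂ ω ≤ X₁ ω then μ₁ else μ₂)) ^ 2 / σ ^ 2
      = 1 / (n₁ + n₂) := by
  have hN : (0:ℝ) < (n₁:ℝ) + n₂ := by positivity
  have hne : ((n₁:ℝ) + n₂) ≠ 0 := hN.ne'
  have hσ2 : (σ:ℝ)^2 ≠ 0 := by positivity
  have hv₁ : (Real.toNNReal (σ ^ 2 / n₁)) ≠ 0 := by
    simp only [ne_eq, Real.toNNReal_eq_zero, not_le]
    have : (0:ℝ) < n₁ := by exact_mod_cast hn₁
    positivity
  have hv₂ : (Real.toNNReal (σ ^ 2 / n₂)) ≠ 0 := by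
    simp only [ne_eq, Real.toNNReal_eq_zero, not_le]
    have : (0:ℝ) < n₂ := by exact_mod_cast hn₂
    positivity
  have hn₁' : (0:ℝ) < n₁ := by exact_mod_cast hn₁
  have hn₂' : (0:ℝ) < n₂ := by exact_mod_cast hn₂
  have hv₁c : ((Real.toNNReal (σ ^ 2 / n₁)) : ℝ) = σ^2 / n₁ :=
    Real.coe_toNNReal _ (by positivity)
  have hv₂c : ((Real.toNNReal (σ ^ 2 / n₂)) : ℝ) = σ^2 / n₂ :=
    Real.coe_toNNReal _ (by positivity)
  have hmeasvec : ∀ i, Measurable (![X₁, X₂, Y₁, Y₂] i) := by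
    intro i; fin_cases i <;> assumption
  -- independence facts
  have hIX : IndepFun X₁ X₂ ℙ := by
    have := hindep.indepFun (show (0 : Fin 4) ≠ 1 by decide)
    simpa using this
  have hIpY₁ : IndepFun (fun ω => (X₁ ω, X₂ ω)) Y₁ ℙ := by
    have := hindep.indepFun_prodMk hmeasvec 0 1 2 (by decide) (by decide)
    simpa using this
  have hIpY₂ : IndepFun (fun ω => (X₁ ω, X₂ ω)) Y₂ ℙ := by
    have := hindep.indepFun_prodMk hmeasvec 0 1 3 (by decide) (by decide)
    simpa using this
  have hpair : Measure.map (fun ω => (X₁ ω, X₂ ω)) ℙ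
      = (gaussianReal μ₁ (Real.toNNReal (σ ^ 2 / n₁))).prod
        (gaussianReal μ₂ (Real.toNNReal (σ ^ 2 / n₁))) := by
    rw [← hX₁, ← hX₂]
    exact (indepFun_iff_map_prod_eq_prod_map_map hm1.aemeasurable hm2.aemeasurable).mp hIX
  -- integrand rewrite
  have hpoint : ∀ ω, ((n₁ * max (X₁ ω) (X₂ ω)
        + n₂ * (if X₂ ω ≤ X₁ ω then Y₁ ω else Y₂ ω)) / (n₁ + n₂)
        - (if X₂ ω ≤ X₁ ω then μ₁ else μ₂)) ^ 2 / σ ^ 2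
      = (1 / (((n₁:ℝ) + n₂)^2 * σ^2)) *
        (if X₂ ω ≤ X₁ ω then ((n₁:ℝ) * (X₁ ω - μ₁) + n₂ * (Y₁ ω - μ₁))^2
          else ((n₁:ℝ) * (X₂ ω - μ₂) + n₂ * (Y₂ ω - μ₂))^2) := by
    intro ω
    by_cases hc : X₂ ω ≤ X₁ ω
    · rw [if_pos hc, if_pos hc, if_pos hc, max_eq_left hc]
      field_simp
      ring
    · rw [if_neg hc, if_neg hc, if_neg hc, max_eq_right (le_of_not_ge hc)]
      field_simp
      ring
  rw [integral_congr_ae (Filter.Eventually.of_forall hpoint), integral_const_mul]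
  -- integrable pieces
  have iU1 : Integrable (fun ω => X₁ ω - μ₁) ℙ := rv_integrable_sub hm1 hv₁ hX₁
  have iU2 : Integrable (fun ω => X₂ ω - μ₂) ℙ := rv_integrable_sub hm2 hv₁ hX₂
  have iV1 : Integrable (fun ω => Y₁ ω - μ₁) ℙ := rv_integrable_sub hm3 hv₂ hY₁
  have iV2 : Integrable (fun ω => Y₂ ω - μ₂) ℙ := rv_integrable_sub hm4 hv₂ hY₂
  have iU1sq : Integrable (fun ω => (X₁ ω - μ₁)^2) ℙ := rv_integrable_sub_sq hm1 hv₁ hX₁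
  have iU2sq : Integrable (fun ω => (X₂ ω - μ₂)^2) ℙ := rv_integrable_sub_sq hm2 hv₁ hX₂
  have iV1sq : Integrable (fun ω => (Y₁ ω - μ₁)^2) ℙ := rv_integrable_sub_sq hm3 hv₂ hY₁
  have iV2sq : Integrable (fun ω => (Y₂ ω - μ₂)^2) ℙ := rv_integrable_sub_sq hm4 hv₂ hY₂
  have hAmeas : MeasurableSet {ω | X₂ ω ≤ X₁ ω} := measurableSet_le hm2 hm1
  have T1 : Integrable (fun ω => if X₂ ω ≤ X₁ ω then (X₁ ω - μ₁)^2 else (X₂ ω - μ₂)^2) ℙ := by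
    refine (iU1sq.add iU2sq).mono
      ((Measurable.ite hAmeas (by fun_prop) (by fun_prop)).aestronglyMeasurable)
      (Filter.Eventually.of_forall fun ω => ?_)
    simp only [Pi.add_apply, Real.norm_eq_abs]
    split_ifs <;>
      rw [abs_of_nonneg (sq_nonneg _), abs_of_nonneg (by positivity)] <;>
      nlinarith [sq_nonneg (X₁ ω - μ₁), sq_nonneg (X₂ ω - μ₂)]
  have iA1 : Integrable (fun ω => if X₂ ω ≤ X₁ ω then X₁ ω - μ₁ else 0) ℙ := by
    refine iU1.mono ((Measurable.ite hAmeas (by fun_prop) (by fun_prop)).aestronglyMeasurable)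
      (Filter.Eventually.of_forall fun ω => ?_)
    simp only [Real.norm_eq_abs]
    split_ifs <;> simp [abs_nonneg]
  have iA2 : Integrable (fun ω => if X₂ ω ≤ X₁ ω then (0:ℝ) else X₂ ω - μ₂) ℙ := by
    refine iU2.mono ((Measurable.ite hAmeas (by fun_prop) (by fun_prop)).aestronglyMeasurable)
      (Filter.Eventually.of_forall fun ω => ?_)
    simp only [Real.norm_eq_abs]
    split_ifs <;> simp [abs_nonneg]
  have iI1 : Integrable (fun ω => if X₂ ω ≤ X₁ ω then (1:ℝ) else 0) ℙ := by
    refine (integrable_const (1:ℝ)).mono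
      ((Measurable.ite hAmeas (by fun_prop) (by fun_prop)).aestronglyMeasurable)
      (Filter.Eventually.of_forall fun ω => ?_)
    simp only [Real.norm_eq_abs]
    split_ifs <;> norm_num
  have iI2 : Integrable (fun ω => if X₂ ω ≤ X₁ ω then (0:ℝ) else 1) ℙ := by
    refine (integrable_const (1:ℝ)).mono
      ((Measurable.ite hAmeas (by fun_prop) (by fun_prop)).aestronglyMeasurable)
      (Filter.Eventually.of_forall fun ω => ?_)
    simp only [Real.norm_eq_abs]
    split_ifs <;> norm_num
  -- independence of composed functions
  have h2a : IndepFun (fun ω => if X₂ ω ≤ X₁ ω then X₁ ω - μ₁ else 0)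
      (fun ω => Y₁ ω - μ₁) ℙ := by
    have := hIpY₁.comp (φ := fun p : ℝ × ℝ => if p.2 ≤ p.1 then p.1 - μ₁ else 0)
      (ψ := fun y => y - μ₁)
      (Measurable.ite (measurableSet_le measurable_snd measurable_fst) (by fun_prop)
        (by fun_prop)) (by fun_prop)
    exact this
  have h2b : IndepFun (fun ω => if X₂ ω ≤ X₁ ω then (0:ℝ) else X₂ ω - μ₂)
      (fun ω => Y₂ ω - μ₂) ℙ := by
    have := hIpY₂.comp (φ := fun p : ℝ × ℝ => if p.2 ≤ p.1 then 0 else p.2 - μ₂)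
      (ψ := fun y => y - μ₂)
      (Measurable.ite (measurableSet_le measurable_snd measurable_fst) (by fun_prop)
        (by fun_prop)) (by fun_prop)
    exact this
  have h3a : IndepFun (fun ω => if X₂ ω ≤ X₁ ω then (1:ℝ) else 0)
      (fun ω => (Y₁ ω - μ₁)^2) ℙ := by
    have := hIpY₁.comp (φ := fun p : ℝ × ℝ => if p.2 ≤ p.1 then (1:ℝ) else 0)
      (ψ := fun y => (y - μ₁)^2)
      (Measurable.ite (measurableSet_le measurable_snd measurable_fst) (by fun_prop)
        (by fun_prop)) (by fun_prop)
    exact this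
  have h3b : IndepFun (fun ω => if X₂ ω ≤ X₁ ω then (0:ℝ) else 1)
      (fun ω => (Y₂ ω - μ₂)^2) ℙ := by
    have := hIpY₂.comp (φ := fun p : ℝ × ℝ => if p.2 ≤ p.1 then (0:ℝ) else 1)
      (ψ := fun y => (y - μ₂)^2)
      (Measurable.ite (measurableSet_le measurable_snd measurable_fst) (by fun_prop)
        (by fun_prop)) (by fun_prop)
    exact this
  -- product integrabilities
  have TA : Integrable (fun ω => (if X₂ ω ≤ X₁ ω then X₁ ω - μ₁ else 0) * (Y₁ ω - μ₁)) ℙ :=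
    h2a.integrable_mul iA1 iV1
  have TB : Integrable (fun ω => (if X₂ ω ≤ X₁ ω then (0:ℝ) else X₂ ω - μ₂) * (Y₂ ω - μ₂)) ℙ :=
    h2b.integrable_mul iA2 iV2
  have TC : Integrable (fun ω => (if X₂ ω ≤ X₁ ω then (1:ℝ) else 0) * (Y₁ ω - μ₁)^2) ℙ :=
    h3a.integrable_mul iI1 iV1sq
  have TD : Integrable (fun ω => (if X₂ ω ≤ X₁ ω then (0:ℝ) else 1) * (Y₂ ω - μ₂)^2) ℙ :=
    h3b.integrable_mul iI2 iV2sq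
  -- decomposition of the quadratic
  have hsplit : ∀ ω, (if X₂ ω ≤ X₁ ω then ((n₁:ℝ) * (X₁ ω - μ₁) + n₂ * (Y₁ ω - μ₁))^2
        else ((n₁:ℝ) * (X₂ ω - μ₂) + n₂ * (Y₂ ω - μ₂))^2)
      = (n₁:ℝ)^2 * (if X₂ ω ≤ X₁ ω then (X₁ ω - μ₁)^2 else (X₂ ω - μ₂)^2)
        + (2 * n₁ * n₂) * ((if X₂ ω ≤ X₁ ω then X₁ ω - μ₁ else 0) * (Y₁ ω - μ₁))
        + (2 * n₁ * n₂) * ((if X₂ ω ≤ X₁ ω then (0:ℝ) else X₂ ω - μ₂) * (Y₂ ω - μ₂))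
        + (n₂:ℝ)^2 * ((if X₂ ω ≤ X₁ ω then (1:ℝ) else 0) * (Y₁ ω - μ₁)^2)
        + (n₂:ℝ)^2 * ((if X₂ ω ≤ X₁ ω then (0:ℝ) else 1) * (Y₂ ω - μ₂)^2) := by
    intro ω
    by_cases hc : X₂ ω ≤ X₁ ω <;> simp only [if_pos, if_neg, hc, if_true, if_false] <;> ring
  rw [integral_congr_ae (Filter.Eventually.of_forall hsplit)]
  -- split the integral
  have J1 := T1.const_mul ((n₁:ℝ)^2)
  have J2 := TA.const_mul ((2:ℝ) * n₁ * n₂)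
  have J3 := TB.const_mul ((2:ℝ) * n₁ * n₂)
  have J4 := TC.const_mul ((n₂:ℝ)^2)
  have J5 := TD.const_mul ((n₂:ℝ)^2)
  have S5 : ∫ ω, ((n₁:ℝ)^2 * (if X₂ ω ≤ X₁ ω then (X₁ ω - μ₁)^2 else (X₂ ω - μ₂)^2) + (2 * (n₁:ℝ) * n₂) * ((if X₂ ω ≤ X₁ ω then X₁ ω - μ₁ else 0) * (Y₁ ω - μ₁)) + (2 * (n₁:ℝ) * n₂) * ((if X₂ ω ≤ X₁ ω then (0:ℝ) else X₂ ω - μ₂) * (Y₂ ω - μ₂)) + (n₂:ℝ)^2 * ((if X₂ ω ≤ X₁ ω then (1:ℝ) else 0) * (Y₁ ω - μ₁)^2) + (n₂:ℝ)^2 * ((if X₂ ω ≤ X₁ ω then (0:ℝ) else 1) * (Y₂ ω - μ₂)^2)) ∂ℙ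
      = (∫ ω, ((n₁:ℝ)^2 * (if X₂ ω ≤ X₁ ω then (X₁ ω - μ₁)^2 else (X₂ ω - μ₂)^2) + (2 * (n₁:ℝ) * n₂) * ((if X₂ ω ≤ X₁ ω then X₁ ω - μ₁ else 0) * (Y₁ ω - μ₁)) + (2 * (n₁:ℝ) * n₂) * ((if X₂ ω ≤ X₁ ω then (0:ℝ) else X₂ ω - μ₂) * (Y₂ ω - μ₂)) + (n₂:ℝ)^2 * ((if X₂ ω ≤ X₁ ω then (1:ℝ) else 0) * (Y₁ ω - μ₁)^2)) ∂ℙ) + ∫ ω, (n₂:ℝ)^2 * ((if X₂ ω ≤ X₁ ω then (0:ℝ) else 1) * (Y₂ ω - μ₂)^2) ∂ℙ :=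
    integral_add (((J1.add J2).add J3).add J4) J5
  have S4 : ∫ ω, ((n₁:ℝ)^2 * (if X₂ ω ≤ X₁ ω then (X₁ ω - μ₁)^2 else (X₂ ω - μ₂)^2) + (2 * (n₁:ℝ) * n₂) * ((if X₂ ω ≤ X₁ ω then X₁ ω - μ₁ else 0) * (Y₁ ω - μ₁)) + (2 * (n₁:ℝ) * n₂) * ((if X₂ ω ≤ X₁ ω then (0:ℝ) else X₂ ω - μ₂) * (Y₂ ω - μ₂)) + (n₂:ℝ)^2 * ((if X₂ ω ≤ X₁ ω then (1:ℝ) else 0) * (Y₁ ω - μ₁)^2)) ∂ℙ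
      = (∫ ω, ((n₁:ℝ)^2 * (if X₂ ω ≤ X₁ ω then (X₁ ω - μ₁)^2 else (X₂ ω - μ₂)^2) + (2 * (n₁:ℝ) * n₂) * ((if X₂ ω ≤ X₁ ω then X₁ ω - μ₁ else 0) * (Y₁ ω - μ₁)) + (2 * (n₁:ℝ) * n₂) * ((if X₂ ω ≤ X₁ ω then (0:ℝ) else X₂ ω - μ₂) * (Y₂ ω - μ₂))) ∂ℙ) + ∫ ω, (n₂:ℝ)^2 * ((if X₂ ω ≤ X₁ ω then (1:ℝ) else 0) * (Y₁ ω - μ₁)^2) ∂ℙ :=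
    integral_add ((J1.add J2).add J3) J4
  have S3 : ∫ ω, ((n₁:ℝ)^2 * (if X₂ ω ≤ X₁ ω then (X₁ ω - μ₁)^2 else (X₂ ω - μ₂)^2) + (2 * (n₁:ℝ) * n₂) * ((if X₂ ω ≤ X₁ ω then X₁ ω - μ₁ else 0) * (Y₁ ω - μ₁)) + (2 * (n₁:ℝ) * n₂) * ((if X₂ ω ≤ X₁ ω then (0:ℝ) else X₂ ω - μ₂) * (Y₂ ω - μ₂))) ∂ℙ
      = (∫ ω, ((n₁:ℝ)^2 * (if X₂ ω ≤ X₁ ω then (X₁ ω - μ₁)^2 else (X₂ ω - μ₂)^2) + (2 * (n₁:ℝ) * n₂) * ((if X₂ ω ≤ X₁ ω then X₁ ω - μ₁ else 0) * (Y₁ ω - μ₁))) ∂ℙ) + ∫ ω, (2 * (n₁:ℝ) * n₂) * ((if X₂ ω ≤ X₁ ω then (0:ℝ) else X₂ ω - μ₂) * (Y₂ ω - μ₂)) ∂ℙ :=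
    integral_add (J1.add J2) J3
  have S2 : ∫ ω, ((n₁:ℝ)^2 * (if X₂ ω ≤ X₁ ω then (X₁ ω - μ₁)^2 else (X₂ ω - μ₂)^2) + (2 * (n₁:ℝ) * n₂) * ((if X₂ ω ≤ X₁ ω then X₁ ω - μ₁ else 0) * (Y₁ ω - μ₁))) ∂ℙ
      = (∫ ω, (n₁:ℝ)^2 * (if X₂ ω ≤ X₁ ω then (X₁ ω - μ₁)^2 else (X₂ ω - μ₂)^2) ∂ℙ) + ∫ ω, (2 * (n₁:ℝ) * n₂) * ((if X₂ ω ≤ X₁ ω then X₁ ω - μ₁ else 0) * (Y₁ ω - μ₁)) ∂ℙ :=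
    integral_add J1 J2
  rw [S5, S4, S3, S2, integral_const_mul, integral_const_mul, integral_const_mul,
    integral_const_mul, integral_const_mul]
  -- evaluate each piece
  have E1 : ∫ ω, (if X₂ ω ≤ X₁ ω then (X₁ ω - μ₁)^2 else (X₂ ω - μ₂)^2) ∂ℙ
      = σ^2 / n₁ := by
    have h := integral_map (μ := (ℙ : Measure Ω)) (φ := fun ω => (X₁ ω, X₂ ω))
      (hm1.prodMk hm2).aemeasurable
      (f := fun p : ℝ × ℝ => if p.2 ≤ p.1 then (p.1 - μ₁)^2 else (p.2 - μ₂)^2)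
      (Measurable.aestronglyMeasurable (Measurable.ite
        (measurableSet_le measurable_snd measurable_fst) (by fun_prop) (by fun_prop)))
    rw [hpair] at h
    calc ∫ ω, (if X₂ ω ≤ X₁ ω then (X₁ ω - μ₁)^2 else (X₂ ω - μ₂)^2) ∂ℙ
        = ∫ p : ℝ × ℝ, (if p.2 ≤ p.1 then (p.1 - μ₁)^2 else (p.2 - μ₂)^2)
            ∂((gaussianReal μ₁ (Real.toNNReal (σ ^ 2 / n₁))).prod
              (gaussianReal μ₂ (Real.toNNReal (σ ^ 2 / n₁)))) := h.symm
      _ = σ^2 / n₁ := by rw [crux hv₁ μ₁ μ₂, hv₁c]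
  have E2 : ∫ ω, (if X₂ ω ≤ X₁ ω then X₁ ω - μ₁ else 0) * (Y₁ ω - μ₁) ∂ℙ = 0 := by
    have h := h2a.integral_fun_mul_eq_mul_integral iA1.aestronglyMeasurable iV1.aestronglyMeasurable
    have hz : ∫ ω, (Y₁ ω - μ₁) ∂ℙ = 0 := rv_integral_sub hm3 hv₂ hY₁
    calc ∫ ω, (if X₂ ω ≤ X₁ ω then X₁ ω - μ₁ else 0) * (Y₁ ω - μ₁) ∂ℙ
        = (∫ ω, (if X₂ ω ≤ X₁ ω then X₁ ω - μ₁ else 0) ∂ℙ) * ∫ ω, (Y₁ ω - μ₁) ∂ℙ := h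
      _ = 0 := by rw [hz, mul_zero]
  have E3 : ∫ ω, (if X₂ ω ≤ X₁ ω then (0:ℝ) else X₂ ω - μ₂) * (Y₂ ω - μ₂) ∂ℙ = 0 := by
    have h := h2b.integral_fun_mul_eq_mul_integral iA2.aestronglyMeasurable iV2.aestronglyMeasurable
    have hz : ∫ ω, (Y₂ ω - μ₂) ∂ℙ = 0 := rv_integral_sub hm4 hv₂ hY₂
    calc ∫ ω, (if X₂ ω ≤ X₁ ω then (0:ℝ) else X₂ ω - μ₂) * (Y₂ ω - μ₂) ∂ℙ
        = (∫ ω, (if X₂ ω ≤ X₁ ω then (0:ℝ) else X₂ ω - μ₂) ∂ℙ) * ∫ ω, (Y₂ ω - μ₂) ∂ℙ := h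
      _ = 0 := by rw [hz, mul_zero]
  set pA := ∫ ω, (if X₂ ω ≤ X₁ ω then (1:ℝ) else 0) ∂ℙ with hpA
  set pB := ∫ ω, (if X₂ ω ≤ X₁ ω then (0:ℝ) else 1) ∂ℙ with hpB
  have E4 : ∫ ω, (if X₂ ω ≤ X₁ ω then (1:ℝ) else 0) * (Y₁ ω - μ₁)^2 ∂ℙ
      = pA * (σ^2 / n₂) := by
    have h := h3a.integral_fun_mul_eq_mul_integral iI1.aestronglyMeasurable iV1sq.aestronglyMeasurable
    have hz : ∫ ω, (Y₁ ω - μ₁)^2 ∂ℙ = σ^2/n₂ := by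
      rw [rv_integral_sub_sq hm3 hv₂ hY₁, hv₂c]
    calc ∫ ω, (if X₂ ω ≤ X₁ ω then (1:ℝ) else 0) * (Y₁ ω - μ₁)^2 ∂ℙ
        = pA * ∫ ω, (Y₁ ω - μ₁)^2 ∂ℙ := h
      _ = pA * (σ^2/n₂) := by rw [hz]
  have E5 : ∫ ω, (if X₂ ω ≤ X₁ ω then (0:ℝ) else 1) * (Y₂ ω - μ₂)^2 ∂ℙ
      = pB * (σ^2 / n₂) := by
    have h := h3b.integral_fun_mul_eq_mul_integral iI2.aestronglyMeasurable iV2sq.aestronglyMeasurable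
    have hz : ∫ ω, (Y₂ ω - μ₂)^2 ∂ℙ = σ^2/n₂ := by
      rw [rv_integral_sub_sq hm4 hv₂ hY₂, hv₂c]
    calc ∫ ω, (if X₂ ω ≤ X₁ ω then (0:ℝ) else 1) * (Y₂ ω - μ₂)^2 ∂ℙ
        = pB * ∫ ω, (Y₂ ω - μ₂)^2 ∂ℙ := h
      _ = pB * (σ^2/n₂) := by rw [hz]
  have hsumP : pA + pB = 1 := by
    rw [hpA, hpB, ← integral_add iI1 iI2]
    have : ∀ ω, (if X₂ ω ≤ X₁ ω then (1:ℝ) else 0) + (if X₂ ω ≤ X₁ ω then (0:ℝ) else 1) = 1 := by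
      intro ω; split_ifs <;> norm_num
    simp_rw [this]
    simp
  rw [E1, E2, E3, E4, E5]
  have hpB' : pB = 1 - pA := by linarith
  rw [hpB']
  field_simp
  ring

lemma iIndepFun_ae_eq {Ω ι : Type*} [MeasurableSpace Ω] {μ : Measure Ω} {β : ι → Type*}
    [mβ : ∀ i, MeasurableSpace (β i)] {f g : ∀ i, Ω → β i}
    (hf : iIndepFun f μ) (h : ∀ i, f i =ᵐ[μ] g i) : iIndepFun g μ := by
  rw [iIndepFun_iff_measure_inter_preimage_eq_mul] at hf ⊢
  intro S sets hmeas
  have hSae : ∀ᵐ ω ∂μ, ∀ i ∈ S, f i ω = g i ω := by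
    rw [Filter.eventually_all_finset]
    exact fun i _ => h i
  have keq : μ (⋂ i ∈ S, g i ⁻¹' sets i) = μ (⋂ i ∈ S, f i ⁻¹' sets i) := by
    refine measure_congr (Filter.eventuallyEq_set.mpr (hSae.mono fun ω hω => ?_))
    simp only [Set.mem_iInter, Set.mem_preimage]
    exact ⟨fun hg i hi => by rw [hω i hi]; exact hg i hi,
      fun hgg i hi => by rw [← hω i hi]; exact hgg i hi⟩
  have keqi : ∀ i ∈ S, μ (g i ⁻¹' sets i) = μ (f i ⁻¹' sets i) := by
    intro i hi
    refine measure_congr (Filter.eventuallyEq_set.mpr ((h i).mono fun ω hω => ?_))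
    simp only [Set.mem_preimage, hω]
  rw [keq, hf S hmeas]
  exact (Finset.prod_congr rfl keqi).symm


/-- In the two-stage adaptive design, the scaled MSE of the MLE
`d_M = (n₁ X_Q + n₂ Y)/(n₁+n₂)` of the selected treatment mean `μ_Q`
is constant and equal to `1/(n₁+n₂)`. Here `Y` is modeled as `Y₁` on the
selection event `{X₁ ≥ X₂}` and `Y₂` on `{X₂ > X₁}`, where `Yᵢ ~ N(μᵢ, σ²/n₂)`
and `X₁, X₂, Y₁, Y₂` are independent. -/
theorem scaled_mse_mle_selected_mean {Ω : Type*} [MeasureSpace Ω]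
    [IsProbabilityMeasure (ℙ : Measure Ω)]
    (X₁ X₂ Y₁ Y₂ : Ω → ℝ) (μ₁ μ₂ σ : ℝ) (hσ : 0 < σ) (n₁ n₂ : ℕ)
    (hn₁ : 0 < n₁) (hn₂ : 0 < n₂)
    (hindep : iIndepFun ![X₁, X₂, Y₁, Y₂] ℙ)
    (hX₁ : Measure.map X₁ ℙ = gaussianReal μ₁ (Real.toNNReal (σ ^ 2 / n₁)))
    (hX₂ : Measure.map X₂ ℙ = gaussianReal μ₂ (Real.toNNReal (σ ^ 2 / n₁)))
    (hY₁ : Measure.map Y₁ ℙ = gaussianReal μ₁ (Real.toNNReal (σ ^ 2 / n₂)))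
    (hY₂ : Measure.map Y₂ ℙ = gaussianReal μ₂ (Real.toNNReal (σ ^ 2 / n₂))) :
    ∫ ω, ((n₁ * max (X₁ ω) (X₂ ω)
        + n₂ * (if X₂ ω ≤ X₁ ω then Y₁ ω else Y₂ ω)) / (n₁ + n₂)
        - (if X₂ ω ≤ X₁ ω then μ₁ else μ₂)) ^ 2 / σ ^ 2
      = 1 / (n₁ + n₂) := by
  have hAE : ∀ (W : Ω → ℝ) (m : ℝ) (v : ℝ≥0), Measure.map W ℙ = gaussianReal m v
      → AEMeasurable W ℙ := by
    intro W m v hmap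
    by_contra h
    have h0 := Measure.map_of_not_aemeasurable h
    rw [hmap] at h0
    exact IsProbabilityMeasure.ne_zero (gaussianReal m v) h0
  have hae1 := hAE X₁ μ₁ _ hX₁
  have hae2 := hAE X₂ μ₂ _ hX₂
  have hae3 := hAE Y₁ μ₁ _ hY₁
  have hae4 := hAE Y₂ μ₂ _ hY₂
  set X₁' := hae1.mk X₁ with hX₁'def
  set X₂' := hae2.mk X₂ with hX₂'def
  set Y₁' := hae3.mk Y₁ with hY₁'def
  set Y₂' := hae4.mk Y₂ with hY₂'def
  have heq1 : X₁ =ᵐ[ℙ] X₁' := hae1.ae_eq_mk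
  have heq2 : X₂ =ᵐ[ℙ] X₂' := hae2.ae_eq_mk
  have heq3 : Y₁ =ᵐ[ℙ] Y₁' := hae3.ae_eq_mk
  have heq4 : Y₂ =ᵐ[ℙ] Y₂' := hae4.ae_eq_mk
  have hindep' : iIndepFun ![X₁', X₂', Y₁', Y₂'] ℙ := by
    refine iIndepFun_ae_eq hindep ?_
    intro i
    fin_cases i
    · simpa using heq1
    · simpa using heq2
    · simpa using heq3
    · simpa using heq4
  have hmain := main' X₁' X₂' Y₁' Y₂' μ₁ μ₂ σ hσ n₁ n₂ hn₁ hn₂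
    hae1.measurable_mk hae2.measurable_mk hae3.measurable_mk hae4.measurable_mk hindep'
    (by rw [← Measure.map_congr heq1]; exact hX₁)
    (by rw [← Measure.map_congr heq2]; exact hX₂)
    (by rw [← Measure.map_congr heq3]; exact hY₁)
    (by rw [← Measure.map_congr heq4]; exact hY₂)
  rw [← hmain]
  refine integral_congr_ae ?_
  filter_upwards [heq1, heq2, heq3, heq4] with ω h1 h2 h3 h4
  rw [h1, h2, h3, h4]
end
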